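/- arXiv:2412.03203 — 2 statements merged into one kernel-verified Lean document; each statement's English description precedes it below -/
import Mathlib

section
/- The injective Boolean homomorphism f : B∞ → B∞ × B∞ (as above) admits no Boolean algebra retraction r : B∞ × B∞ → B∞ with r ∘ f = id. -/
/-- `B∞`: the Boolean algebra of finite and cofinite subsets of `ℕ`. -/
def Binf : Type := {s : Set ℕ // s.Finite ∨ sᶜ.Finite}

namespace Binf

lemma mem_union {s t : Set ℕ} (hs : s.Finite ∨ sᶜ.Finite) (ht : t.Finite ∨ tᶜ.Finite) :
    (s ∪ t).Finite ∨ (s ∪ t)ᶜ.Finite := by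
  rcases hs with hs | hs
  · rcases ht with ht | ht
    · exact Or.inl (hs.union ht)
    · exact Or.inr (ht.subset (by rw [Set.compl_union]; exact Set.inter_subset_right))
  · exact Or.inr (hs.subset (by rw [Set.compl_union]; exact Set.inter_subset_left))

lemma mem_compl {s : Set ℕ} (hs : s.Finite ∨ sᶜ.Finite) :
    sᶜ.Finite ∨ sᶜᶜ.Finite := by
  rcases hs with hs | hs
  · exact Or.inr (by rwa [compl_compl])
  · exact Or.inl hs

lemma mem_inter {s t : Set ℕ} (hs : s.Finite ∨ sᶜ.Finite) (ht : t.Finite ∨ tᶜ.Finite) :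
    (s ∩ t).Finite ∨ (s ∩ t)ᶜ.Finite := by
  rcases hs with hs | hs
  · exact Or.inl (hs.subset Set.inter_subset_left)
  · rcases ht with ht | ht
    · exact Or.inl (ht.subset Set.inter_subset_right)
    · exact Or.inr (by rw [Set.compl_inter]; exact hs.union ht)

instance : Max Binf := ⟨fun s t => ⟨s.1 ∪ t.1, mem_union s.2 t.2⟩⟩
instance : Min Binf := ⟨fun s t => ⟨s.1 ∩ t.1, mem_inter s.2 t.2⟩⟩
instance : Top Binf := ⟨⟨Set.univ, Or.inr (by simp)⟩⟩
instance : Bot Binf := ⟨⟨∅, Or.inl (by simp)⟩⟩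
instance : Compl Binf := ⟨fun s => ⟨s.1ᶜ, mem_compl s.2⟩⟩
instance : SDiff Binf := ⟨fun s t => ⟨s.1 \ t.1, mem_inter s.2 (mem_compl t.2)⟩⟩
instance : HImp Binf := ⟨fun s t => ⟨t.1 ∪ s.1ᶜ, mem_union t.2 (mem_compl s.2)⟩⟩

instance : LE Binf := ⟨fun s t => s.1 ≤ t.1⟩
instance : LT Binf := ⟨fun s t => s.1 < t.1⟩

instance : BooleanAlgebra Binf :=
  Function.Injective.booleanAlgebra (fun s : Binf => s.1) Subtype.val_injective
    Iff.rfl Iff.rfl (fun _ _ => rfl) (fun _ _ => rfl) rfl rfl (fun _ => rfl) (fun _ _ => rfl)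
    (fun _ _ => himp_eq.symm)

/-- The Boolean homomorphism `f : B∞ → B∞ × B∞` with `f {2k} = ({k}, ∅)` and
`f {2k+1} = (∅, {k})`, realized by taking preimages along `k ↦ 2k` and `k ↦ 2k+1`. -/
def f (s : Binf) : Binf × Binf :=
  (⟨(fun k => 2 * k) ⁻¹' s.1, by
      rcases s.2 with h | h
      · exact Or.inl (h.preimage (Function.Injective.injOn (fun a b => by omega)))
      · exact Or.inr (by
          rw [← Set.preimage_compl]
          exact h.preimage (Function.Injective.injOn (fun a b => by omega)))⟩,
   ⟨(fun k => 2 * k + 1) ⁻¹' s.1, by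
      rcases s.2 with h | h
      · exact Or.inl (h.preimage (Function.Injective.injOn (fun a b => by omega)))
      · exact Or.inr (by
          rw [← Set.preimage_compl]
          exact h.preimage (Function.Injective.injOn (fun a b => by omega)))⟩)

end Binf

/-!
A retraction `r` is monotone, so `{2k} = r (f {2k}) ≤ r (⊤, ⊥)` and `{2k+1} ≤ r (⊥, ⊤)`.
Being a bounded lattice map, `r` sends the complementary pair `(⊤, ⊥)`, `(⊥, ⊤)` to a
complementary pair. Hence `r (⊤, ⊥)` contains every even and no odd number, so neither it nor
its complement is finite, which is impossible in `B∞`.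
-/

namespace Binf

def single (n : ℕ) : Binf := ⟨{n}, Or.inl (Set.finite_singleton n)⟩

lemma single_le_iff {n : ℕ} {s : Binf} : single n ≤ s ↔ n ∈ s.1 := Set.singleton_subset_iff

lemma coe_compl (s : Binf) : (sᶜ).1 = s.1ᶜ := rfl

lemma f_single_even_le (k : ℕ) : f (single (2 * k)) ≤ (⊤, ⊥) :=
  ⟨le_top, fun j (hj : 2 * j + 1 = 2 * k) => absurd hj (by omega)⟩

lemma f_single_odd_le (k : ℕ) : f (single (2 * k + 1)) ≤ (⊥, ⊤) :=
  ⟨fun j (hj : 2 * j = 2 * k + 1) => absurd hj (by omega), le_top⟩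

end Binf

theorem no_boolean_retraction :
    ¬ ∃ r : BoundedLatticeHom (Binf × Binf) Binf, ∀ s : Binf, r (Binf.f s) = s := by
  rintro ⟨r, hr⟩
  set x := r (⊤, ⊥)
  have le_r_of_f_le {s : Binf} {p : Binf × Binf} (h : Binf.f s ≤ p) : s ≤ r p :=
    hr s ▸ OrderHomClass.mono r h
  have hcompl : r (⊥, ⊤) = xᶜ :=
    ((Prod.isCompl_iff.2 ⟨isCompl_top_bot, isCompl_bot_top⟩).map r).compl_eq.symm
  have hevens (k : ℕ) : 2 * k ∈ x.1 :=
    Binf.single_le_iff.1 (le_r_of_f_le (Binf.f_single_even_le k))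
  have hodds (k : ℕ) : 2 * k + 1 ∈ x.1ᶜ := by
    rw [← Binf.coe_compl, ← hcompl]
    exact Binf.single_le_iff.1 (le_r_of_f_le (Binf.f_single_odd_le k))
  rcases x.2 with hfin | hfin
  · exact Set.infinite_of_injective_forall_mem (fun a b h => by omega) hevens hfin
  · exact Set.infinite_of_injective_forall_mem (fun a b h => by omega) hodds hfin
end

section
/- Every continuous map f : D² → D² from the closed unit disk to itself has a fixed point. -/
/-!
Suppose `f` has no fixed point on the closed unit disk `D ⊆ ℂ`. Then `z ↦ z - f z` does not vanish
on the simply connected `D`, so it has a continuous logarithm `L`, and `θ ↦ L (e^{iθ})` is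
`2π`-periodic. On the unit circle, `(z - f z) / z = 1 - f z / z` never lies on `(-∞, 0]`, because
`‖f z / z‖ ≤ 1` and `f z ≠ z`; hence `θ ↦ iθ + log (1 - f (e^{iθ}) / e^{iθ})` is another continuous
logarithm of `z - f z` along the circle, and it increases by `2πi` over one turn. Two continuous
logarithms of the same function differ by a constant, which is absurd.
-/

open Complex Metric

theorem ContinuousMap.exists_exp_eq_of_ne_zero {A : Type*} [TopologicalSpace A]
    [SimplyConnectedSpace A] [LocallyPathConnectedSpace A] (g : C(A, ℂ)) (hg : ∀ a, g a ≠ 0) :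
    ∃ L : C(A, ℂ), ∀ a, exp (L a) = g a := by
  obtain ⟨a₀⟩ := PathConnectedSpace.nonempty (X := A)
  obtain ⟨L, ⟨-, hL⟩, -⟩ :=
    isCoveringMapOn_exp.existsUnique_continuousMap_lifts g (exp_log (hg a₀)) hg
  exact ⟨L, congrFun hL⟩

theorem Complex.sub_eq_sub_of_exp_eq_exp {X : Type*} [TopologicalSpace X] [PreconnectedSpace X]
    {φ ψ : X → ℂ} (hφ : Continuous φ) (hψ : Continuous ψ) (h : ∀ x, exp (φ x) = exp (ψ x))
    (x y : X) : φ x - ψ x = φ y - ψ y := by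
  have hlift : φ = fun z ↦ ψ z + (φ y - ψ y) := by
    refine isCoveringMap_exp.eq_of_comp_eq hφ (by fun_prop) ?_ y (by ring)
    funext z
    simp [exp_add, exp_sub, h]
  rw [hlift]
  ring

theorem Complex.one_sub_mem_slitPlane_of_norm_le_one {u : ℂ} (hu : ‖u‖ ≤ 1) (h1 : u ≠ 1) :
    1 - u ∈ slitPlane := by
  rw [mem_slitPlane_iff]
  by_contra! h
  simp only [sub_re, one_re, sub_im, one_im, zero_sub, neg_eq_zero] at h
  have := re_le_norm u
  exact h1 (ext (by rw [one_re]; linarith) (by rw [one_im]; exact h.2))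

theorem Complex.exists_fixedPoint_closedBall (f : closedBall (0 : ℂ) 1 → closedBall (0 : ℂ) 1)
    (hf : Continuous f) : ∃ z, f z = z := by
  by_contra! hfix
  have := (convex_closedBall (0 : ℂ) 1).contractibleSpace (nonempty_closedBall.2 zero_le_one)
  have := (convex_closedBall (0 : ℂ) 1).locallyPathConnectedSpace
  obtain ⟨L, hL⟩ := ContinuousMap.exists_exp_eq_of_ne_zero
    ⟨fun z : closedBall (0 : ℂ) 1 ↦ (z : ℂ) - f z, by fun_prop⟩
    fun z h ↦ hfix z (Subtype.ext (sub_eq_zero.1 h).symm)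
  let c : ℝ → closedBall (0 : ℂ) 1 := fun θ ↦ ⟨exp (θ * I), by simp [norm_exp_ofReal_mul_I]⟩
  have hslit : ∀ θ, 1 - (f (c θ) : ℂ) / exp (θ * I) ∈ slitPlane := fun θ ↦ by
    refine one_sub_mem_slitPlane_of_norm_le_one ?_ ?_
    · simpa [norm_exp_ofReal_mul_I] using mem_closedBall_zero_iff.1 (f (c θ)).2
    · rw [Ne, div_eq_one_iff_eq (exp_ne_zero _)]
      exact fun h ↦ hfix (c θ) (Subtype.ext h)
  have hcont : Continuous fun θ : ℝ ↦ 1 - (f (c θ) : ℂ) / exp (θ * I) := by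
    fun_prop (disch := exact fun _ ↦ exp_ne_zero _)
  have key := sub_eq_sub_of_exp_eq_exp (φ := fun θ ↦ L (c θ))
    (ψ := fun θ ↦ θ * I + log (1 - (f (c θ) : ℂ) / exp (θ * I))) (by fun_prop)
    ((by fun_prop : Continuous fun θ : ℝ ↦ (θ : ℂ) * I).add (hcont.clog hslit))
    (fun θ ↦ ?_) (2 * Real.pi) 0
  · have hperiod : c (2 * Real.pi) = c 0 := Subtype.ext (by simp [c, exp_two_pi_mul_I])
    simp [hperiod, exp_two_pi_mul_I, Real.pi_ne_zero, I_ne_zero] at key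
  · rw [exp_add, exp_log (slitPlane_ne_zero (hslit θ)), hL, mul_one_sub,
      mul_div_cancel₀ _ (exp_ne_zero _)]
    rfl

theorem brouwer_fixed_point_disk
    (f : {p : ℝ × ℝ // p.1 ^ 2 + p.2 ^ 2 ≤ 1} → {p : ℝ × ℝ // p.1 ^ 2 + p.2 ^ 2 ≤ 1})
    (hf : Continuous f) :
    ∃ x, f x = x := by
  let e : {p : ℝ × ℝ // p.1 ^ 2 + p.2 ^ 2 ≤ 1} ≃ₜ closedBall (0 : ℂ) 1 :=
    equivRealProdCLM.toHomeomorph.symm.subtype fun p ↦ by simp [norm_def, normSq_apply, ← sq]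
  obtain ⟨z, hz⟩ := exists_fixedPoint_closedBall (e ∘ f ∘ e.symm) (by fun_prop)
  exact ⟨e.symm z, by simpa using congrArg e.symm hz⟩
end
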